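/- Symmetric periodic orbit criterion: under the CR3BP reflection symmetry and uniqueness of solutions, if a trajectory has perpendicular crossings of the xz-plane at t = 0 and at t = T/2 (i.e., y = u = w = 0 at both times), then the trajectory is T-periodic: X(t+T) = X(t) for all t. -/

import Mathlib

noncomputable def r1 (μ x y z : ℝ) : ℝ := Real.sqrt ((x + μ)^2 + y^2 + z^2)
noncomputable def r2 (μ x y z : ℝ) : ℝ := Real.sqrt ((x + μ - 1)^2 + y^2 + z^2)

/-- A solution of the CR3BP equations of motion in the rotating frame. -/
def IsCRSol (μ : ℝ) (x y z u v w : ℝ → ℝ) : Prop :=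
  ∀ t : ℝ,
    HasDerivAt x (u t) t ∧ HasDerivAt y (v t) t ∧ HasDerivAt z (w t) t ∧
    HasDerivAt u (x t + 2 * v t
        - (1 - μ) * (x t + μ) / (r1 μ (x t) (y t) (z t))^3
        - μ * (x t + μ - 1) / (r2 μ (x t) (y t) (z t))^3) t ∧
    HasDerivAt v (y t - 2 * u t
        - (1 - μ) * y t / (r1 μ (x t) (y t) (z t))^3
        - μ * y t / (r2 μ (x t) (y t) (z t))^3) t ∧
    HasDerivAt w (-(1 - μ) * z t / (r1 μ (x t) (y t) (z t))^3
        - μ * z t / (r2 μ (x t) (y t) (z t))^3) t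

/-!
A trajectory that crosses the fixed-point set of the reversing reflection `S` at time `a` is,
by uniqueness of solutions, equal to its own reflected time-reversal `t ↦ S (X (2a - t))`.
Two such crossings at `0` and `T / 2` compose to the translation `t ↦ t + T`, so `X` is
`T`-periodic.
-/

open Topology

section ReversibleODE

variable {E : Type*} [NormedAddCommGroup E] [NormedSpace ℝ E] {F : E → E} {f g : ℝ → E}

theorem ODE_solution_unique_of_contDiffAt_eventually {t₀ : ℝ}
    (hf : ∀ t, HasDerivAt f (F (f t)) t) (hg : ∀ t, HasDerivAt g (F (g t)) t)
    (hF : ContDiffAt ℝ 1 F (f t₀)) (heq : f t₀ = g t₀) : f =ᶠ[𝓝 t₀] g := by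
  obtain ⟨K, s, hs, hlip⟩ := hF.exists_lipschitzOnWith
  have hfs : ∀ᶠ t in 𝓝 t₀, f t ∈ s := (hf t₀).continuousAt.preimage_mem_nhds hs
  have hgs : ∀ᶠ t in 𝓝 t₀, g t ∈ s := (hg t₀).continuousAt.preimage_mem_nhds (heq ▸ hs)
  exact ODE_solution_unique_of_eventually (v := fun _ ↦ F) (s := fun _ ↦ s)
    (.of_forall fun _ ↦ hlip) (hfs.mono fun t ht ↦ ⟨hf t, ht⟩)
    (hgs.mono fun t ht ↦ ⟨hg t, ht⟩) heq

theorem ODE_solution_unique_univ_of_contDiffAt {t₀ : ℝ}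
    (hf : ∀ t, HasDerivAt f (F (f t)) t) (hg : ∀ t, HasDerivAt g (F (g t)) t)
    (hF : ∀ t, ContDiffAt ℝ 1 F (f t)) (heq : f t₀ = g t₀) : f = g := by
  have hclosed : IsClosed {t | f t = g t} :=
    isClosed_eq (continuous_iff_continuousAt.2 fun t ↦ (hf t).continuousAt)
      (continuous_iff_continuousAt.2 fun t ↦ (hg t).continuousAt)
  have hopen : IsOpen {t | f t = g t} := isOpen_iff_mem_nhds.2 fun t ht ↦
    ODE_solution_unique_of_contDiffAt_eventually hf hg (hF t) ht
  have huniv := IsClopen.eq_univ ⟨hclosed, hopen⟩ ⟨t₀, heq⟩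
  exact funext (Set.eq_univ_iff_forall.1 huniv)

variable {S : E →L[ℝ] E}

theorem ODE_solution_eq_reflect_of_isFixedPt
    (hf : ∀ t, HasDerivAt f (F (f t)) t) (hF : ∀ t, ContDiffAt ℝ 1 F (f t))
    (hrev : ∀ p, F (S p) = -S (F p)) {a : ℝ} (ha : Function.IsFixedPt S (f a)) (t : ℝ) :
    f t = S (f (2 * a - t)) := by
  have hreflect : ∀ t, HasDerivAt (fun t ↦ S (f (2 * a - t))) (F (S (f (2 * a - t)))) t := by
    intro t
    have := S.hasFDerivAt.comp_hasDerivAt t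
      ((hf (2 * a - t)).scomp t ((hasDerivAt_id t).const_sub (2 * a)))
    simpa [Function.comp_def, hrev] using this
  have hcross : f a = S (f (2 * a - a)) := by rw [two_mul, add_sub_cancel_right, ha]
  exact congrFun (ODE_solution_unique_univ_of_contDiffAt hf hreflect hF hcross) t

theorem ODE_solution_periodic_of_isFixedPt
    (hf : ∀ t, HasDerivAt f (F (f t)) t) (hF : ∀ t, ContDiffAt ℝ 1 F (f t))
    (hrev : ∀ p, F (S p) = -S (F p)) {a b : ℝ} (ha : Function.IsFixedPt S (f a))
    (hb : Function.IsFixedPt S (f b)) : Function.Periodic f (2 * (b - a)) := by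
  intro t
  calc f (t + 2 * (b - a)) = S (f (2 * b - (t + 2 * (b - a)))) :=
        ODE_solution_eq_reflect_of_isFixedPt hf hF hrev hb _
    _ = S (f (2 * a - t)) := by ring_nf
    _ = f t := (ODE_solution_eq_reflect_of_isFixedPt hf hF hrev ha t).symm

end ReversibleODE

section CR3BP

abbrev PhaseSpace : Type := ℝ × ℝ × ℝ × ℝ × ℝ × ℝ

noncomputable def crVectorField (μ : ℝ) (p : PhaseSpace) : PhaseSpace :=
  let (x, y, z, u, v, w) := p
  (u, v, w,
   x + 2 * v - (1 - μ) * (x + μ) / (r1 μ x y z)^3 - μ * (x + μ - 1) / (r2 μ x y z)^3,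
   y - 2 * u - (1 - μ) * y / (r1 μ x y z)^3 - μ * y / (r2 μ x y z)^3,
   -(1 - μ) * z / (r1 μ x y z)^3 - μ * z / (r2 μ x y z)^3)

def crReflection : PhaseSpace →L[ℝ] PhaseSpace :=
  let i := ContinuousLinearMap.id ℝ ℝ
  i.prodMap ((-i).prodMap (i.prodMap ((-i).prodMap (i.prodMap (-i)))))

@[simp]
theorem crReflection_apply (x y z u v w : ℝ) :
    crReflection (x, y, z, u, v, w) = (x, -y, z, -u, v, -w) := rfl

theorem crVectorField_crReflection (μ : ℝ) (p : PhaseSpace) :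
    crVectorField μ (crReflection p) = -crReflection (crVectorField μ p) := by
  obtain ⟨x, y, z, u, v, w⟩ := p
  simp only [crReflection_apply, crVectorField, r1, r2, even_two, Even.neg_pow, Prod.neg_mk,
    Prod.mk.injEq, neg_neg, true_and, and_true]
  ring

theorem contDiffAt_crVectorField (μ : ℝ) (p : PhaseSpace)
    (h1 : 0 < r1 μ p.1 p.2.1 p.2.2.1) (h2 : 0 < r2 μ p.1 p.2.1 p.2.2.1) :
    ContDiffAt ℝ 1 (crVectorField μ) p := by
  have h1_pow := pow_ne_zero 3 h1.ne'
  have h2_pow := pow_ne_zero 3 h2.ne'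
  have h1_sq := (Real.sqrt_pos.mp h1).ne'
  have h2_sq := (Real.sqrt_pos.mp h2).ne'
  unfold r1 at h1_pow h1_sq
  unfold r2 at h2_pow h2_sq
  unfold crVectorField r1 r2
  fun_prop (disch := assumption)

theorem IsCRSol.hasDerivAt {μ : ℝ} {x y z u v w : ℝ → ℝ} (hsol : IsCRSol μ x y z u v w)
    (t : ℝ) : HasDerivAt (fun t ↦ ((x t, y t, z t, u t, v t, w t) : PhaseSpace))
      (crVectorField μ (x t, y t, z t, u t, v t, w t)) t :=
  let ⟨hx, hy, hz, hu, hv, hw⟩ := hsol t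
  hx.prodMk (hy.prodMk (hz.prodMk (hu.prodMk (hv.prodMk hw))))

end CR3BP

theorem two_perpendicular_crossings_periodic_general (μ : ℝ)
    (x y z u v w : ℝ → ℝ) (hsol : IsCRSol μ x y z u v w)
    (hr1 : ∀ t, 0 < r1 μ (x t) (y t) (z t))
    (hr2 : ∀ t, 0 < r2 μ (x t) (y t) (z t))
    (T : ℝ)
    (hy0 : y 0 = 0) (hu0 : u 0 = 0) (hw0 : w 0 = 0)
    (hyh : y (T / 2) = 0) (huh : u (T / 2) = 0) (hwh : w (T / 2) = 0) :
    ∀ t : ℝ, x (t + T) = x t ∧ y (t + T) = y t ∧ z (t + T) = z t ∧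
      u (t + T) = u t ∧ v (t + T) = v t ∧ w (t + T) = w t := by
  have hperiodic := ODE_solution_periodic_of_isFixedPt hsol.hasDerivAt
    (fun t ↦ contDiffAt_crVectorField μ _ (hr1 t) (hr2 t)) (crVectorField_crReflection μ)
    (a := 0) (b := T / 2) (by simp [Function.IsFixedPt, hy0, hu0, hw0])
    (by simp [Function.IsFixedPt, hyh, huh, hwh])
  rw [show 2 * (T / 2 - 0) = T by ring] at hperiodic
  intro t
  simpa using hperiodic t

/-- Symmetric periodic orbit criterion: a CR3BP trajectory with perpendicular crossings of the
`xz`-plane (`y = u = w = 0`) at `t = 0` and `t = T/2` is `T`-periodic. -/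
theorem two_perpendicular_crossings_periodic (μ : ℝ) (hμ : μ ∈ Set.Ioo (0:ℝ) 1)
    (x y z u v w : ℝ → ℝ) (hsol : IsCRSol μ x y z u v w)
    (hr1 : ∀ t, 0 < r1 μ (x t) (y t) (z t))
    (hr2 : ∀ t, 0 < r2 μ (x t) (y t) (z t))
    (T : ℝ) (hT : 0 < T)
    (hy0 : y 0 = 0) (hu0 : u 0 = 0) (hw0 : w 0 = 0)
    (hyh : y (T / 2) = 0) (huh : u (T / 2) = 0) (hwh : w (T / 2) = 0) :
    ∀ t : ℝ, x (t + T) = x t ∧ y (t + T) = y t ∧ z (t + T) = z t ∧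
      u (t + T) = u t ∧ v (t + T) = v t ∧ w (t + T) = w t :=
  two_perpendicular_crossings_periodic_general μ x y z u v w hsol hr1 hr2 T hy0 hu0 hw0 hyh huh hwh
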